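/- Every norm bounded pairwise disjoint sequence in a Banach lattice is unbounded absolutely weakly null, i.e., |x_n| ∧ u → 0 weakly for each positive u. -/

import Mathlib

open Filter Topology NormedSpace

section Defs
variable (E : Type*) [NormedAddCommGroup E] [NormedSpace ℝ E] [Lattice (StrongDual ℝ E)]

/-- A sequence in the dual is weak* null. -/
def WeakStarNull (x' : ℕ → StrongDual ℝ E) : Prop :=
  ∀ v : E, Tendsto (fun n => x' n v) atTop (𝓝 0)

/-- A sequence in the dual is weakly null (null for the weak topology of `E'`). -/
def WeaklyNullDual (x' : ℕ → StrongDual ℝ E) : Prop :=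
  ∀ F : StrongDual ℝ (StrongDual ℝ E), Tendsto (fun n => F (x' n)) atTop (𝓝 0)

/-- A sequence in the dual is unbounded weak* null: `|xₙ'| ⊓ u' → 0` weak* for every `0 ≤ u'`. -/
def UawStarNull (x' : ℕ → StrongDual ℝ E) : Prop :=
  ∀ u' : StrongDual ℝ E, 0 ≤ u' → ∀ v : E, Tendsto (fun n => (|x' n| ⊓ u') v) atTop (𝓝 0)

/-- The unbounded Grothendieck property. -/
def HasUGP : Prop :=
  ∀ x' : ℕ → StrongDual ℝ E, (∃ C, ∀ n, ‖x' n‖ ≤ C) → UawStarNull E x' → WeaklyNullDual E x'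

/-- The disjoint Grothendieck property. -/
def HasDGP : Prop :=
  ∀ x' : ℕ → StrongDual ℝ E, (∃ C, ∀ n, ‖x' n‖ ≤ C) →
    (Pairwise fun m n => |x' m| ⊓ |x' n| = 0) → WeaklyNullDual E x'

/-- The weak Grothendieck property. -/
def HasWGP : Prop :=
  ∀ x' : ℕ → StrongDual ℝ E, (Pairwise fun m n => |x' m| ⊓ |x' n| = 0) →
    WeakStarNull E x' → WeaklyNullDual E x'

/-- The Grothendieck property. -/
def HasGP : Prop :=
  ∀ x' : ℕ → StrongDual ℝ E, WeakStarNull E x' → WeaklyNullDual E x'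

/-- The positive Grothendieck property. -/
def HasPGP : Prop :=
  ∀ x' : ℕ → StrongDual ℝ E, (∀ n, 0 ≤ x' n) → WeakStarNull E x' → WeaklyNullDual E x'

/-- The norm is order continuous: any downward directed set with infimum `0`
contains elements of arbitrarily small norm. -/
def HasOrderContinuousNorm (X : Type*) [NormedAddCommGroup X] [Lattice X] : Prop :=
  ∀ A : Set X, A.Nonempty → DirectedOn (· ≥ ·) A → IsGLB A 0 →
    ∀ ε : ℝ, 0 < ε → ∃ a ∈ A, ‖a‖ < ε

/-- σ-order completeness: every nonempty countable order bounded set has a supremum. -/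
def SigmaOrderComplete (X : Type*) [Lattice X] : Prop :=
  ∀ A : Set X, A.Countable → A.Nonempty → BddAbove A → ∃ s, IsLUB A s

end Defs


section LatticeOrderedGroup

variable {α ι : Type*} [Lattice α] [AddCommGroup α] [IsOrderedAddMonoid α]

theorem inf_add_le_inf_add_inf {a b c : α} (ha : 0 ≤ a) (hb : 0 ≤ b) (hc : 0 ≤ c) :
    a ⊓ (b + c) ≤ a ⊓ b + a ⊓ c := by
  rw [add_inf, inf_add, inf_add]
  refine le_inf (le_inf ?_ ?_) (le_inf ?_ inf_le_right)
  · exact inf_le_left.trans (le_add_of_nonneg_left ha)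
  · exact inf_le_left.trans (le_add_of_nonneg_left hb)
  · exact inf_le_left.trans (le_add_of_nonneg_right hc)

theorem inf_sum_le_sum_inf {a : α} (ha : 0 ≤ a) {s : Finset ι} {y : ι → α}
    (hy : ∀ i ∈ s, 0 ≤ y i) : a ⊓ ∑ i ∈ s, y i ≤ ∑ i ∈ s, a ⊓ y i :=
  Finset.le_sum_of_subadditive_on_pred (a ⊓ ·) (0 ≤ ·) inf_le_right
    (fun _ _ hb hc => inf_add_le_inf_add_inf ha hb hc) (fun _ _ => add_nonneg) y hy

theorem add_eq_sup_of_inf_eq_zero {a b : α} (h : a ⊓ b = 0) : a + b = a ⊔ b := by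
  rw [← inf_add_sup a b, h, zero_add]

theorem sum_le_of_pairwise_inf_eq_zero {s : Finset ι} {y : ι → α} {u : α} (hu : 0 ≤ u)
    (hy : ∀ i ∈ s, 0 ≤ y i) (hyu : ∀ i ∈ s, y i ≤ u)
    (hd : (s : Set ι).Pairwise fun i j => y i ⊓ y j = 0) : ∑ i ∈ s, y i ≤ u := by
  classical
  induction s using Finset.induction with
  | empty => simpa using hu
  | insert b t hbt ih =>
    simp only [Finset.mem_insert, forall_eq_or_imp] at hy hyu
    rw [Finset.coe_insert, Set.pairwise_insert] at hd
    have hdisj : y b ⊓ ∑ i ∈ t, y i = 0 := by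
      refine le_antisymm ?_ (le_inf hy.1 (Finset.sum_nonneg hy.2))
      calc y b ⊓ ∑ i ∈ t, y i ≤ ∑ i ∈ t, y b ⊓ y i := inf_sum_le_sum_inf hy.1 hy.2
        _ = 0 := Finset.sum_eq_zero fun i hi => (hd.2 i hi (ne_of_mem_of_not_mem hi hbt).symm).1
    rw [Finset.sum_insert hbt, add_eq_sup_of_inf_eq_zero hdisj]
    exact sup_le hyu.1 (ih hy.2 hyu.2 hd.1)

end LatticeOrderedGroup

section NormedLattice

variable {E ι : Type*} [NormedAddCommGroup E] [Lattice E] [NormedSpace ℝ E]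

theorem exists_abs_eq_and_apply_eq_abs (f : StrongDual ℝ E) (y : E) :
    ∃ z : E, |z| = |y| ∧ f z = |f y| := by
  rcases le_or_gt 0 (f y) with h | h
  · exact ⟨y, rfl, (abs_of_nonneg h).symm⟩
  · exact ⟨-y, abs_neg y, by rw [map_neg, abs_of_neg h]⟩

variable [IsOrderedAddMonoid E] [HasSolidNorm E]

/-- Choose `zᵢ = ±yᵢ` with `f zᵢ = |f yᵢ|`; then `|∑ zᵢ| ≤ ∑ |yᵢ| ≤ u`, because disjoint
positive elements add like suprema. -/
theorem sum_abs_apply_le_of_pairwise_disjoint (f : StrongDual ℝ E) (s : Finset ι) {y : ι → E}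
    {u : E} (hu : 0 ≤ u) (hyu : ∀ i, |y i| ≤ u) (hd : Pairwise fun i j => |y i| ⊓ |y j| = 0) :
    ∑ i ∈ s, |f (y i)| ≤ ‖f‖ * ‖u‖ := by
  choose z hzy hfz using fun i => exists_abs_eq_and_apply_eq_abs f (y i)
  have hz : |∑ i ∈ s, z i| ≤ |u| :=
    calc |∑ i ∈ s, z i| ≤ ∑ i ∈ s, |z i| :=
          Finset.le_sum_of_subadditive _ abs_zero.le abs_add_le _ _
      _ = ∑ i ∈ s, |y i| := Finset.sum_congr rfl fun i _ => hzy i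
      _ ≤ u := sum_le_of_pairwise_inf_eq_zero hu (fun i _ => abs_nonneg _) (fun i _ => hyu i)
          (hd.set_pairwise _)
      _ = |u| := (abs_of_nonneg hu).symm
  calc ∑ i ∈ s, |f (y i)| = f (∑ i ∈ s, z i) := by simp only [map_sum, hfz]
    _ ≤ ‖f (∑ i ∈ s, z i)‖ := le_abs_self _
    _ ≤ ‖f‖ * ‖∑ i ∈ s, z i‖ := f.le_opNorm _
    _ ≤ ‖f‖ * ‖u‖ := by gcongr; exact norm_le_norm_of_abs_le_abs hz

theorem tendsto_apply_of_pairwise_disjoint (f : StrongDual ℝ E) {y : ℕ → E} {u : E} (hu : 0 ≤ u)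
    (hyu : ∀ n, |y n| ≤ u) (hd : Pairwise fun m n => |y m| ⊓ |y n| = 0) :
    Tendsto (fun n => f (y n)) atTop (𝓝 0) := by
  have hsum : Summable fun n => |f (y n)| :=
    summable_of_sum_le (fun n => abs_nonneg _)
      fun s => sum_abs_apply_le_of_pairwise_disjoint f s hu hyu hd
  exact (tendsto_zero_iff_abs_tendsto_zero _).mpr hsum.tendsto_atTop_zero

end NormedLattice

variable {E : Type*} [NormedAddCommGroup E] [Lattice E] [IsOrderedAddMonoid E] [HasSolidNorm E] [NormedSpace ℝ E] [CompleteSpace E]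
  [Lattice (StrongDual ℝ E)]

theorem bounded_disjoint_uaw_null_general (x : ℕ → E)
    (hd : Pairwise fun m n => |x m| ⊓ |x n| = 0) :
    ∀ u : E, 0 ≤ u → ∀ f : StrongDual ℝ E, Tendsto (fun n => f (|x n| ⊓ u)) atTop (𝓝 0) := by
  intro u hu f
  have hnonneg : ∀ n, 0 ≤ |x n| ⊓ u := fun n => le_inf (abs_nonneg _) hu
  have habs : ∀ n, |(|x n| ⊓ u)| = |x n| ⊓ u := fun n => abs_of_nonneg (hnonneg n)
  refine tendsto_apply_of_pairwise_disjoint f hu (fun n => (habs n).trans_le inf_le_right) ?_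
  intro m n hmn
  rw [habs, habs]
  refine le_antisymm ?_ (le_inf (hnonneg m) (hnonneg n))
  exact (inf_le_inf inf_le_left inf_le_left).trans_eq (hd hmn)

/-- Every norm bounded pairwise disjoint sequence in a Banach lattice is
unbounded absolutely weakly null: `|xₙ| ⊓ u → 0` weakly for every `0 ≤ u`. -/
theorem bounded_disjoint_uaw_null (x : ℕ → E) (hb : ∃ C, ∀ n, ‖x n‖ ≤ C)
    (hd : Pairwise fun m n => |x m| ⊓ |x n| = 0) :
    ∀ u : E, 0 ≤ u → ∀ f : StrongDual ℝ E, Tendsto (fun n => f (|x n| ⊓ u)) atTop (𝓝 0) :=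
  bounded_disjoint_uaw_null_general x hd
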